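/- For every nonnegative integer n, the type 2 degenerate cosine-Euler polynomials satisfy $E_{n,\lambda}^{(c)}(x,y)=\sum_{k=0}^{n}\sum_{m=0}^{\lfloor k/2\rfloor}\binom{n}{k}E_{n-k,\lambda}(x)(-1)^m\lambda^{k-2m}y^{2m}S_1(k,2m)$. -/

import Mathlib

/-!
Since `e_λ^x(t) = exp(x · log(1 + λt)/λ) = Σ_j x^j (log(1 + λt))^j / (λ^j j!)`, the defining
series of `S₁` gives `(x)_{n,λ} = Σ_j S₁(n,j) λ^(n-j) x^j`; we obtain this expansion by induction
from the recurrence of `S₁`, which comes from differentiating `log(1 + t)^(j+1)`. Averaging it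
over `x = ± i y` keeps the even `j = 2m`, with sign `(-1)^m`, which expands `cos_λ^{(y)}(t)`.
The generating function of `E^{(c)}` is that of `E` times `cos_λ^{(y)}(t)`, and the product of
exponential generating functions is the binomial convolution.
-/

open PowerSeries Finset Complex

/-- The degenerate falling factorial `(x)_{n,λ} = x(x-λ)⋯(x-(n-1)λ)`. -/
noncomputable def dff (l x : ℂ) (n : ℕ) : ℂ := ∏ j ∈ Finset.range n, (x - j * l)

/-- Exponential generating function of a sequence: `Σ f n * t^n / n!`. -/
noncomputable def egf (f : ℕ → ℂ) : PowerSeries ℂ := PowerSeries.mk fun n => f n / n.factorial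

/-- The degenerate exponential `e_λ^x(t) = (1+λt)^{x/λ} = Σ (x)_{n,λ} t^n/n!` as a power series. -/
noncomputable def degExp (l x : ℂ) : PowerSeries ℂ := egf (dff l x)

/-- The degenerate cosine `cos_λ^{(y)}(t) = cos((y/λ) log(1+λt)) = (e_λ^{iy}(t)+e_λ^{-iy}(t))/2`. -/
noncomputable def degCos (l y : ℂ) : PowerSeries ℂ :=
  PowerSeries.C (1/2 : ℂ) * (degExp l (Complex.I * y) + degExp l (-(Complex.I * y)))

/-- The degenerate sine `sin_λ^{(y)}(t) = sin((y/λ) log(1+λt)) = (e_λ^{iy}(t)-e_λ^{-iy}(t))/(2i)`. -/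
noncomputable def degSin (l y : ℂ) : PowerSeries ℂ :=
  PowerSeries.C (1/(2*Complex.I) : ℂ) * (degExp l (Complex.I * y) - degExp l (-(Complex.I * y)))

/-- The exponential series `e^{at} = Σ a^n t^n/n!`. -/
noncomputable def expS (a : ℂ) : PowerSeries ℂ := egf (fun n => a ^ n)

/-- The series of `log(1+t)`. -/
noncomputable def logS : PowerSeries ℂ := PowerSeries.mk fun n => if n = 0 then 0 else (-1)^(n+1) / n

open scoped Nat

lemma sum_range_succ_eq_sum_even_of_odd {M : Type*} [AddCommMonoid M] (g : ℕ → M)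
    (hg : ∀ j, Odd j → g j = 0) (k : ℕ) :
    ∑ j ∈ range (k + 1), g j = ∑ m ∈ range (k / 2 + 1), g (2 * m) := by
  induction k with
  | zero => simp
  | succ k ih =>
    rw [sum_range_succ, ih]
    rcases Nat.even_or_odd (k + 1) with ⟨m, hm⟩ | hodd
    · rw [show (k + 1) / 2 = k / 2 + 1 by omega, sum_range_succ _ (k / 2 + 1),
        show 2 * (k / 2 + 1) = k + 1 by omega]
    · obtain ⟨m, hm⟩ := hodd
      rw [hg _ ⟨m, hm⟩, add_zero, show (k + 1) / 2 = k / 2 by omega]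

lemma sum_mul_pow_add_sum_mul_neg_pow {R : Type*} [CommRing R] (f : ℕ → R) (z : R) (k : ℕ) :
    ∑ j ∈ range (k + 1), f j * z ^ j + ∑ j ∈ range (k + 1), f j * (-z) ^ j =
      2 * ∑ m ∈ range (k / 2 + 1), f (2 * m) * z ^ (2 * m) := by
  rw [← sum_add_distrib, sum_range_succ_eq_sum_even_of_odd, mul_sum]
  · exact sum_congr rfl fun m _ => by rw [(even_two_mul m).neg_pow]; ring
  · intro j hj
    rw [hj.neg_pow]
    ring

lemma coeff_egf (f : ℕ → ℂ) (n : ℕ) : coeff n (egf f) = f n / n ! := by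
  simp [egf]

lemma egf_injective : Function.Injective egf := by
  intro f g h
  funext n
  have := congrArg (coeff n) h
  rwa [coeff_egf, coeff_egf, div_left_inj' (Nat.cast_ne_zero.mpr n.factorial_ne_zero)] at this

lemma egf_add (f g : ℕ → ℂ) : egf (f + g) = egf f + egf g := by
  ext n; simp [coeff_egf, add_div]

lemma C_mul_egf (a : ℂ) (f : ℕ → ℂ) : C a * egf f = egf (a • f) := by
  ext n; simp [coeff_egf, mul_div_assoc]

lemma derivative_egf (f : ℕ → ℂ) : d⁄dX ℂ (egf f) = egf fun n => f (n + 1) := by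
  ext n
  rw [coeff_derivative, coeff_egf, coeff_egf, Nat.factorial_succ]
  push_cast
  field_simp

lemma X_mul_egf_succ (f : ℕ → ℂ) : X * egf (fun n => f (n + 1)) = egf fun n => n * f n := by
  ext n
  rcases n with _ | n
  · simp [coeff_egf]
  · rw [coeff_succ_X_mul, coeff_egf, coeff_egf, Nat.factorial_succ]
    push_cast
    field_simp

lemma egf_mul (f g : ℕ → ℂ) :
    egf f * egf g = egf fun n => ∑ k ∈ range (n + 1), n.choose k * f k * g (n - k) := by
  ext n
  rw [coeff_mul, Nat.sum_antidiagonal_eq_sum_range_succ_mk, coeff_egf, sum_div]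
  refine sum_congr rfl fun k hk => ?_
  rw [coeff_egf, coeff_egf, Nat.cast_choose ℂ (Nat.lt_succ_iff.mp (mem_range.mp hk))]
  have hfac : (n ! : ℂ) ≠ 0 := Nat.cast_ne_zero.mpr n.factorial_ne_zero
  field_simp

lemma constantCoeff_degExp (l x : ℂ) : constantCoeff (degExp l x) = 1 := by
  simp [degExp, ← coeff_zero_eq_constantCoeff_apply, coeff_egf, dff]

lemma one_add_X_mul_derivative_logS : (1 + X) * d⁄dX ℂ logS = 1 := by
  have h : d⁄dX ℂ logS = mk fun n => (-1) ^ n := by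
    ext n
    rw [coeff_derivative]
    simp only [logS, coeff_mk, Nat.succ_ne_zero, if_false]
    field_simp
    push_cast
    ring
  ext n
  rcases n with _ | n
  · simp [h]
  · simp [h, add_mul, coeff_succ_X_mul, pow_succ]

/-- `S` is the signed Stirling table (`Nat.stirlingFirst` is the unsigned one). -/
def IsStirlingFirst (S : ℕ → ℕ → ℂ) : Prop :=
  ∀ j, logS ^ j = C (j ! : ℂ) * egf fun k => S k j

namespace IsStirlingFirst

variable {S : ℕ → ℕ → ℂ}

lemma zero_right (hS : IsStirlingFirst S) (n : ℕ) : S n 0 = if n = 0 then 1 else 0 := by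
  have h := congrArg (coeff n) (hS 0)
  simp only [pow_zero, Nat.factorial_zero, Nat.cast_one, C_mul_egf, one_smul, coeff_one,
    coeff_egf] at h
  split_ifs at h ⊢ with hn
  · subst hn; simpa using h.symm
  · simpa [Nat.factorial_ne_zero] using h.symm

lemma zero_succ (hS : IsStirlingFirst S) (j : ℕ) : S 0 (j + 1) = 0 := by
  have h := congrArg (coeff 0) (hS (j + 1))
  have hlog : constantCoeff logS = 0 := by simp [logS]
  rw [coeff_zero_eq_constantCoeff_apply, map_pow, hlog, zero_pow j.succ_ne_zero, coeff_C_mul,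
    coeff_egf] at h
  simpa [Nat.factorial_ne_zero] using h.symm

lemma succ_succ (hS : IsStirlingFirst S) (n j : ℕ) :
    S (n + 1) (j + 1) = S n j - n * S n (j + 1) := by
  have hlog : (1 + X) * d⁄dX ℂ (logS ^ (j + 1)) = C ((j + 1 : ℕ) : ℂ) * logS ^ j := by
    rw [Derivation.leibniz_pow, smul_eq_mul, nsmul_eq_mul, Nat.add_sub_cancel, map_natCast]
    calc (1 + X) * (((j + 1 : ℕ) : ℂ⟦X⟧) * (logS ^ j * d⁄dX ℂ logS))
        = ((j + 1 : ℕ) : ℂ⟦X⟧) * logS ^ j * ((1 + X) * d⁄dX ℂ logS) := by ring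
      _ = ((j + 1 : ℕ) : ℂ⟦X⟧) * logS ^ j := by rw [one_add_X_mul_derivative_logS, mul_one]
  rw [hS, hS, Derivation.leibniz, derivative_C, smul_zero, add_zero, smul_eq_mul, derivative_egf,
    mul_left_comm, add_mul, one_mul, X_mul_egf_succ fun m => S m (j + 1), ← egf_add, ← mul_assoc,
    ← map_mul, ← Nat.cast_mul, ← Nat.factorial_succ] at hlog
  have hfac : C (((j + 1)! : ℕ) : ℂ) ≠ 0 := by
    rw [Ne, map_eq_zero_iff C C_injective]
    exact_mod_cast (j + 1).factorial_ne_zero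
  have h := congrFun (egf_injective (mul_left_cancel₀ hfac hlog)) n
  simp only [Pi.add_apply] at h
  linear_combination h

lemma eq_zero_of_lt (hS : IsStirlingFirst S) {n j : ℕ} (h : n < j) : S n j = 0 := by
  induction n generalizing j with
  | zero =>
    obtain ⟨j, rfl⟩ := Nat.exists_eq_add_of_lt h
    exact hS.zero_succ _
  | succ n ih =>
    obtain ⟨j, rfl⟩ := Nat.exists_eq_add_of_le' (Nat.zero_lt_of_lt h)
    rw [hS.succ_succ, ih (by omega), ih (by omega), mul_zero, sub_zero]

lemma dff_eq_sum (hS : IsStirlingFirst S) (l x : ℂ) (n : ℕ) :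
    dff l x n = ∑ j ∈ range (n + 1), S n j * l ^ (n - j) * x ^ j := by
  induction n with
  | zero => simp [dff, hS.zero_right]
  | succ n ih =>
    have hlow : (n : ℂ) * S n 0 = 0 := by rcases n with _ | n <;> simp [hS.zero_right]
    have htop : S n (n + 1) = 0 := hS.eq_zero_of_lt n.lt_succ_self
    have hshift : ∑ j ∈ range (n + 1), S n j * l ^ (n - j) * x ^ j * (n * l) =
        ∑ j ∈ range (n + 1), n * S n (j + 1) * l ^ (n - j) * x ^ (j + 1) := by
      have h0 : S n 0 * l ^ (n - 0) * x ^ 0 * (n * l) = 0 := by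
        linear_combination (l ^ (n - 0) * x ^ 0 * l) * hlow
      rw [sum_range_succ', sum_range_succ, htop, h0, mul_zero, zero_mul, zero_mul, add_zero,
        add_zero]
      refine sum_congr rfl fun j hj => ?_
      rw [show n - j = n - (j + 1) + 1 by grind, pow_succ]
      ring
    rw [dff, prod_range_succ, ← dff, ih, sum_range_succ' _ (n + 1), hS.zero_right,
      if_neg n.succ_ne_zero, zero_mul, zero_mul, add_zero]
    simp only [hS.succ_succ, Nat.succ_sub_succ, mul_sub, sub_mul, sum_sub_distrib, ← hshift]
    rw [sum_mul, sum_mul]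
    congr 1
    exact sum_congr rfl fun j _ => by ring

lemma degCos_eq_egf (hS : IsStirlingFirst S) (l y : ℂ) :
    degCos l y = egf fun k => ∑ m ∈ range (k / 2 + 1),
      (-1) ^ m * l ^ (k - 2 * m) * y ^ (2 * m) * S k (2 * m) := by
  rw [degCos, degExp, degExp, ← egf_add, C_mul_egf]
  congr 1
  funext k
  simp only [Pi.smul_apply, Pi.add_apply, smul_eq_mul, hS.dff_eq_sum]
  rw [sum_mul_pow_add_sum_mul_neg_pow (fun j => S k j * l ^ (k - j)), ← mul_assoc,
    one_div, inv_mul_cancel₀ two_ne_zero, one_mul]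
  exact sum_congr rfl fun m _ => by rw [mul_pow, pow_mul, I_sq]; ring

end IsStirlingFirst

theorem stmt13 (lam x y : ℝ) (E Ec : ℕ → ℂ) (S1 : ℕ → ℕ → ℂ)
    (hE : egf E * (degExp lam (1/2) + degExp lam (-(1/2))) = 2 * degExp lam x)
    (hEc : egf Ec * (degExp lam (1/2) + degExp lam (-(1/2))) =
      2 * degExp lam x * degCos lam y)
    (hS1 : ∀ j, logS ^ j = PowerSeries.C (Nat.factorial j : ℂ) * egf (fun k => S1 k j))
    (n : ℕ) :
    Ec n = ∑ k ∈ Finset.range (n+1), ∑ m ∈ Finset.range (k/2+1),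
      (n.choose k : ℂ) * E (n-k) * (-1)^m * (lam:ℂ)^(k-2*m) * (y:ℂ)^(2*m) * S1 k (2*m) := by
  have hD : degExp lam (1/2) + degExp lam (-(1/2)) ≠ 0 := fun h => by
    simpa [constantCoeff_degExp] using congrArg constantCoeff h
  have hEc' : egf Ec = degCos lam y * egf E :=
    mul_right_cancel₀ hD (by rw [hEc, mul_assoc (degCos _ _), hE]; ring)
  rw [IsStirlingFirst.degCos_eq_egf hS1, egf_mul] at hEc'
  rw [congrFun (egf_injective hEc') n]
  exact sum_congr rfl fun k _ => by rw [mul_sum, sum_mul]; exact sum_congr rfl fun m _ => by ring
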